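/- Let v : ℝ³ → ℝ³ be smooth, compactly supported and divergence-free, let p be smooth compactly supported, and ν ≥ 0. Define F(v) := νΔv − (v·∇)v − ∇p. Then ∫_{ℝ³} ⟨F(v), v⟩ dx = −ν ∑_{i,j} ∫ (∂vᵢ/∂xⱼ)² dx ≤ 0. -/

import Mathlib

open MeasureTheory

/-- Partial derivative in direction `i` of a scalar function on ℝ³. -/
noncomputable def pd (i : Fin 3) (f : (Fin 3 → ℝ) → ℝ) : (Fin 3 → ℝ) → ℝ :=
  fun x => fderiv ℝ f x (Pi.single i 1)

/-- Laplacian of a scalar function on ℝ³. -/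
noncomputable def lap (f : (Fin 3 → ℝ) → ℝ) : (Fin 3 → ℝ) → ℝ :=
  fun x => ∑ j, pd j (pd j f) x

/-- The Navier–Stokes right-hand side `F(v) = νΔv − (v·∇)v − ∇p`, `i`-th component. -/
noncomputable def nsRHS (ν : ℝ) (v : Fin 3 → (Fin 3 → ℝ) → ℝ) (p : (Fin 3 → ℝ) → ℝ)
    (i : Fin 3) : (Fin 3 → ℝ) → ℝ :=
  fun x => ν * lap (v i) x - (∑ j, v j x * pd j (v i) x) - pd i p x

lemma pd_contDiff {f : (Fin 3 → ℝ) → ℝ} (hf : ContDiff ℝ (⊤ : ℕ∞) f) (j : Fin 3) :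
    ContDiff ℝ (⊤ : ℕ∞) (pd j f) :=
  (hf.fderiv_right (by simp)).clm_apply contDiff_const

lemma pd_compSupp {f : (Fin 3 → ℝ) → ℝ} (hfs : HasCompactSupport f) (j : Fin 3) :
    HasCompactSupport (pd j f) :=
  (hfs.fderiv ℝ).comp_left (g := fun L : (Fin 3 → ℝ) →L[ℝ] ℝ => L (Pi.single j 1)) rfl

lemma myinteg {a b : (Fin 3 → ℝ) → ℝ} (ha : Continuous a) (hb : Continuous b)
    (hbs : HasCompactSupport b) : Integrable (fun x => a x * b x) :=
  (ha.mul hb).integrable_of_hasCompactSupport (hbs.mul_left)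

lemma ibp {f g : (Fin 3 → ℝ) → ℝ} (hf : ContDiff ℝ (⊤ : ℕ∞) f) (hg : ContDiff ℝ (⊤ : ℕ∞) g)
    (hfs : HasCompactSupport f) (hgs : HasCompactSupport g) (j : Fin 3) :
    ∫ x, pd j f x * g x = -∫ x, pd j g x * f x := by
  obtain ⟨C, hC⟩ := hf.lipschitzWith_of_hasCompactSupport hfs (by simp)
  obtain ⟨D, hD⟩ := hg.lipschitzWith_of_hasCompactSupport hgs (by simp)
  have key := LipschitzWith.integral_lineDeriv_mul_eq (μ := volume) hC hD hgs (Pi.single j 1)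
  have hfd : ∀ x, DifferentiableAt ℝ f x := fun x =>
    (hf.differentiable (by simp)).differentiableAt
  have hgd : ∀ x, DifferentiableAt ℝ g x := fun x =>
    (hg.differentiable (by simp)).differentiableAt
  simp only [(hfd _).lineDeriv_eq_fderiv, (hgd _).lineDeriv_eq_fderiv, map_neg] at key
  rw [show (∫ x, pd j f x * g x) = ∫ x, fderiv ℝ f x (Pi.single j 1) * g x from rfl, key]
  rw [← integral_neg]
  simp [pd, mul_comm]

lemma pd_mul_self {f : (Fin 3 → ℝ) → ℝ} (hf : ContDiff ℝ (⊤ : ℕ∞) f) (j : Fin 3) (x : Fin 3 → ℝ) :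
    pd j (fun y => f y * f y) x = 2 * (f x * pd j f x) := by
  have hd : DifferentiableAt ℝ f x := (hf.differentiable (by simp)).differentiableAt
  simp only [pd]
  rw [fderiv_fun_mul hd hd]
  simp; ring

theorem stmt_12 (v : Fin 3 → (Fin 3 → ℝ) → ℝ) (p : (Fin 3 → ℝ) → ℝ) (ν : ℝ) (hν : 0 ≤ ν)
    (hsmooth : ∀ i, ContDiff ℝ (⊤ : ℕ∞) (v i))
    (hsupp : ∀ i, HasCompactSupport (v i))
    (hp : ContDiff ℝ (⊤ : ℕ∞) p) (hpsupp : HasCompactSupport p)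
    (hdiv : ∀ x, ∑ j, pd j (v j) x = 0) :
    (∫ x : Fin 3 → ℝ, ∑ i, nsRHS ν v p i x * v i x)
      = -ν * ∑ i, ∑ j, ∫ x : Fin 3 → ℝ, (pd j (v i) x) ^ 2 ∧
    (∫ x : Fin 3 → ℝ, ∑ i, nsRHS ν v p i x * v i x) ≤ 0 := by
  have hvc : ∀ i, Continuous (v i) := fun i => (hsmooth i).continuous
  have hpdc : ∀ i j, Continuous (pd j (v i)) := fun i j => (pd_contDiff (hsmooth i) j).continuous
  have hpd2c : ∀ i j, Continuous (pd j (pd j (v i))) := fun i j =>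
    (pd_contDiff (pd_contDiff (hsmooth i) j) j).continuous
  have hpc : Continuous p := hp.continuous
  have hpdpc : ∀ i, Continuous (pd i p) := fun i => (pd_contDiff hp i).continuous
  have hlapc : ∀ i, Continuous (lap (v i)) := fun i => by
    unfold lap; exact continuous_finset_sum _ (fun j _ => hpd2c i j)
  have hsumc : ∀ i, Continuous (fun x => ∑ j, v j x * pd j (v i) x) := fun i =>
    continuous_finset_sum _ (fun j _ => (hvc j).mul (hpdc i j))
  -- Laplacian term
  have lapterm : ∀ i, (∫ x, lap (v i) x * v i x) = -∑ j, ∫ x, (pd j (v i) x) ^ 2 := by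
    intro i
    have : (∫ x, lap (v i) x * v i x) = ∑ j, ∫ x, pd j (pd j (v i)) x * v i x := by
      rw [← integral_finset_sum]
      · simp only [lap, Finset.sum_mul]
      · exact fun j _ => myinteg (hpd2c i j) (hvc i) (hsupp i)
    rw [this, ← Finset.sum_neg_distrib]
    congr 1; ext j
    rw [ibp (pd_contDiff (hsmooth i) j) (hsmooth i) (pd_compSupp (hsupp i) j) (hsupp i) j]
    congr 1; congr 1; ext x; ring
  -- convection term vanishes
  have convterm : ∀ i, (∫ x, (∑ j, v j x * pd j (v i) x) * v i x) = 0 := by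
    intro i
    set w : (Fin 3 → ℝ) → ℝ := fun y => v i y * v i y with hw
    have hwsm : ContDiff ℝ (⊤ : ℕ∞) w := (hsmooth i).mul (hsmooth i)
    have hwcs : HasCompactSupport w := (hsupp i).mul_left
    have hwc : Continuous w := hwsm.continuous
    have h1 : (∫ x, (∑ j, v j x * pd j (v i) x) * v i x)
        = ∑ j, ∫ x, v j x * pd j (v i) x * v i x := by
      rw [← integral_finset_sum]
      · simp only [Finset.sum_mul]
      · exact fun j _ => myinteg ((hvc j).mul (hpdc i j)) (hvc i) (hsupp i)
    have h2 : ∀ j, (∫ x, v j x * pd j (v i) x * v i x)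
        = (1/2 : ℝ) * ∫ x, pd j w x * v j x := by
      intro j
      rw [← integral_const_mul]
      congr 1; ext x
      rw [pd_mul_self (hsmooth i)]
      ring
    have h3 : ∀ j, (∫ x, pd j w x * v j x) = -∫ x, pd j (v j) x * w x := fun j =>
      ibp hwsm (hsmooth j) hwcs (hsupp j) j
    rw [h1]
    simp only [h2, h3]
    rw [← Finset.mul_sum]
    have h4 : ∑ j : Fin 3, ∫ x, pd j (v j) x * w x = 0 := by
      rw [← integral_finset_sum _ (fun j _ => myinteg (hpdc j j) hwc hwcs)]
      have : ∀ x, (∑ j, pd j (v j) x * w x) = 0 := fun x => by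
        rw [← Finset.sum_mul, hdiv x, zero_mul]
      simp only [this, integral_zero]
    simp only [Finset.sum_neg_distrib, h4, neg_zero, mul_zero]
  -- pressure term vanishes after summation
  have pressterm : ∑ i : Fin 3, ∫ x, pd i p x * v i x = 0 := by
    have h1 : ∀ i : Fin 3, (∫ x, pd i p x * v i x) = -∫ x, pd i (v i) x * p x := fun i =>
      ibp hp (hsmooth i) hpsupp (hsupp i) i
    simp only [h1]
    rw [Finset.sum_neg_distrib, ← integral_finset_sum _
      (fun i _ => myinteg (hpdc i i) hpc hpsupp)]
    have : ∀ x, (∑ i, pd i (v i) x * p x) = 0 := fun x => by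
      rw [← Finset.sum_mul, hdiv x, zero_mul]
    simp only [this, integral_zero, neg_zero]
  -- Splitting the main integral
  have step2 : ∀ i, (∫ x, nsRHS ν v p i x * v i x)
      = ν * (∫ x, lap (v i) x * v i x) - (∫ x, (∑ j, v j x * pd j (v i) x) * v i x)
        - ∫ x, pd i p x * v i x := by
    intro i
    have e1 : (fun x => nsRHS ν v p i x * v i x)
        = fun x => ν * (lap (v i) x * v i x) - (∑ j, v j x * pd j (v i) x) * v i x
            - pd i p x * v i x := by
      ext x; unfold nsRHS; ring
    rw [e1, integral_sub, integral_sub, integral_const_mul]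
    · exact (myinteg (hlapc i) (hvc i) (hsupp i)).const_mul ν
    · exact myinteg (hsumc i) (hvc i) (hsupp i)
    · exact ((myinteg (hlapc i) (hvc i) (hsupp i)).const_mul ν).sub
        (myinteg (hsumc i) (hvc i) (hsupp i))
    · exact myinteg (hpdpc i) (hvc i) (hsupp i)
  have hnsc : ∀ i, Continuous (nsRHS ν v p i) := fun i => by
    unfold nsRHS
    exact ((continuous_const.mul (hlapc i)).sub (hsumc i)).sub (hpdpc i)
  have step1 : (∫ x : Fin 3 → ℝ, ∑ i, nsRHS ν v p i x * v i x)
      = ∑ i, ∫ x, nsRHS ν v p i x * v i x :=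
    integral_finset_sum _ (fun i _ => myinteg (hnsc i) (hvc i) (hsupp i))
  have main : (∫ x : Fin 3 → ℝ, ∑ i, nsRHS ν v p i x * v i x)
      = -ν * ∑ i, ∑ j, ∫ x : Fin 3 → ℝ, (pd j (v i) x) ^ 2 := by
    rw [step1]
    simp only [step2, convterm, lapterm, sub_zero]
    rw [Finset.sum_sub_distrib, pressterm, sub_zero, ← Finset.mul_sum]
    rw [Finset.sum_neg_distrib]
    ring
  refine ⟨main, ?_⟩
  rw [main]
  have hS : 0 ≤ ∑ i : Fin 3, ∑ j : Fin 3, ∫ x : Fin 3 → ℝ, (pd j (v i) x) ^ 2 :=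
    Finset.sum_nonneg fun i _ => Finset.sum_nonneg fun j _ =>
      integral_nonneg fun x => sq_nonneg _
  have := mul_nonneg hν hS
  linarith
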